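/- If R is a standard balanced tableau in which entries i and i+1 lie in different rows and different columns with i strictly above i+1, then exchanging i and i+1 yields a standard balanced tableau R' with inv(R') = inv(R) − 1. -/

import Mathlib

/-!
Exchanging `i` and `i + 1` is the transposition `swap i (i + 1)` applied to the entries, and
an adjacent transposition preserves the relative order of every pair of entries except the
pair `{i, i + 1}` itself. Since the cells of `i` and `i + 1` share neither a row nor a column,
no row or column count in the balance condition compares them, so balance is preserved; and
among the inversion pairs only `(i, i + 1)` is lost, as its reverse is not an inversion.
-/

/-- The Coxeter length of `w`: the number of inversion pairs. -/
def invCount {n : ℕ} (w : Equiv.Perm (Fin n)) : ℕ :=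
  (Finset.univ.filter fun p : Fin n × Fin n => p.1 < p.2 ∧ w p.2 < w p.1).card

/-- The Rothe diagram of `w` (0-indexed): the cells `(i, w j)` for inversions `i < j`,
`w j < w i`, as a subset of `ℕ × ℕ` (first coordinate the row, drawn with row `0` at the
bottom so that "above" means larger first coordinate; second coordinate the column). -/
def RotheD (n : ℕ) (w : Equiv.Perm (Fin n)) : Finset (ℕ × ℕ) :=
  (Finset.univ.filter fun p : Fin n × Fin n => p.1 < p.2 ∧ w p.2 < w p.1).image
    fun p => ((p.1 : ℕ), (w p.2 : ℕ))

/-- A standard balanced tableau on a diagram `D`: a bijective filling of the cells of `D`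
by `1, …, |D|` such that for every cell, the number of larger entries to its right in its
row equals the number of smaller entries above it in its column. -/
def IsSBT (D : Finset (ℕ × ℕ)) (T : ℕ × ℕ → ℕ) : Prop :=
  Set.InjOn T ↑D ∧ D.image T = Finset.Icc 1 D.card ∧
  ∀ x ∈ D, (D.filter fun y => y.1 = x.1 ∧ x.2 < y.2 ∧ T x < T y).card
    = (D.filter fun y => y.2 = x.2 ∧ x.1 < y.1 ∧ T y < T x).card

/-- The inversion number of a tableau on `D`: the number of pairs of entries `i < j`
with `i` in a strictly higher row and a different column than `j`. -/
def invT (D : Finset (ℕ × ℕ)) (T : ℕ × ℕ → ℕ) : ℕ :=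
  ((D ×ˢ D).filter fun p => T p.1 < T p.2 ∧ p.2.1 < p.1.1 ∧ p.1.2 ≠ p.2.2).card

open Equiv

theorem swap_succ_lt_swap_succ_iff {i a b : ℕ} (hab : ¬(a = i ∧ b = i + 1))
    (hba : ¬(a = i + 1 ∧ b = i)) :
    swap i (i + 1) a < swap i (i + 1) b ↔ a < b := by
  simp only [swap_apply_def]
  split_ifs <;> omega

theorem Finset.image_swap_of_mem {α : Type*} [DecidableEq α] {s : Finset α} {a b : α}
    (ha : a ∈ s) (hb : b ∈ s) : s.image (swap a b) = s := by
  have hsupp : {z | swap a b z ≠ z} ⊆ s := fun z hz => by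
    rcases (swap_apply_ne_self_iff.mp hz).2 with rfl | rfl <;> assumption
  simpa [Finset.map_eq_image] using Finset.map_perm hsupp

section SwapEntries

variable {D : Finset (ℕ × ℕ)} {T : ℕ × ℕ → ℕ} {i : ℕ} {x y : ℕ × ℕ}

theorem swap_comp_lt_swap_comp_iff (hinj : Set.InjOn T D) (hx : x ∈ D) (hy : y ∈ D)
    (hTx : T x = i) (hTy : T y = i + 1) {z u : ℕ × ℕ} (hz : z ∈ D) (hu : u ∈ D)
    (hzu : ¬(z = x ∧ u = y)) (huz : ¬(z = y ∧ u = x)) :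
    swap i (i + 1) (T z) < swap i (i + 1) (T u) ↔ T z < T u := by
  have hx' : ∀ v ∈ D, T v = i → v = x := fun v hv h => hinj hv hx (h.trans hTx.symm)
  have hy' : ∀ v ∈ D, T v = i + 1 → v = y := fun v hv h => hinj hv hy (h.trans hTy.symm)
  exact swap_succ_lt_swap_succ_iff (fun ⟨h, h'⟩ => hzu ⟨hx' z hz h, hy' u hu h'⟩)
    (fun ⟨h, h'⟩ => huz ⟨hy' z hz h, hx' u hu h'⟩)

theorem IsSBT.swap_comp (hT : IsSBT D T) (hx : x ∈ D) (hy : y ∈ D) (hTx : T x = i)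
    (hTy : T y = i + 1) (hrow : x.1 ≠ y.1) (hcol : x.2 ≠ y.2) :
    IsSBT D (swap i (i + 1) ∘ T) := by
  obtain ⟨hinj, himg, hbal⟩ := hT
  have hlt {z u} (hz : z ∈ D) (hu : u ∈ D) (hline : z.1 = u.1 ∨ z.2 = u.2) :
      swap i (i + 1) (T z) < swap i (i + 1) (T u) ↔ T z < T u :=
    swap_comp_lt_swap_comp_iff hinj hx hy hTx hTy hz hu
      (by rintro ⟨rfl, rfl⟩; exact hline.elim hrow hcol)
      (by rintro ⟨rfl, rfl⟩; exact hline.elim (hrow ·.symm) (hcol ·.symm))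
  have hmem {z} (hz : z ∈ D) : T z ∈ Finset.Icc 1 D.card :=
    himg ▸ Finset.mem_image_of_mem T hz
  refine ⟨(swap i (i + 1)).injective.comp_injOn hinj, ?_, fun z hz => ?_⟩
  · rw [← Finset.image_image, himg]
    exact Finset.image_swap_of_mem (hTx ▸ hmem hx) (hTy ▸ hmem hy)
  · convert hbal z hz using 2 <;> refine Finset.filter_congr fun u hu => ?_
    · exact and_congr_right fun hr => and_congr_right fun _ => hlt hz hu (Or.inl hr.symm)
    · exact and_congr_right fun hr => and_congr_right fun _ => hlt hu hz (Or.inr hr)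

theorem invT_swap_comp_add_one (hinj : Set.InjOn T D) (hx : x ∈ D) (hy : y ∈ D)
    (hTx : T x = i) (hTy : T y = i + 1) (habove : y.1 < x.1) (hcol : x.2 ≠ y.2) :
    invT D (swap i (i + 1) ∘ T) + 1 = invT D T := by
  have hlt {z u} (hz : z ∈ D) (hu : u ∈ D) (hzu : ¬(z = x ∧ u = y)) (hrow : u.1 < z.1) :
      swap i (i + 1) (T z) < swap i (i + 1) (T u) ↔ T z < T u :=
    swap_comp_lt_swap_comp_iff hinj hx hy hTx hTy hz hu hzu (by rintro ⟨rfl, rfl⟩; omega)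
  have hxy : (x, y) ∈ (D ×ˢ D).filter
      fun p => T p.1 < T p.2 ∧ p.2.1 < p.1.1 ∧ p.1.2 ≠ p.2.2 := by
    simp [hx, hy, hTx, hTy, habove, hcol]
  rw [invT, invT, ← Finset.card_erase_add_one hxy]
  congr 2
  ext ⟨z, u⟩
  simp only [Finset.mem_erase, Finset.mem_filter, Finset.mem_product, Function.comp_apply,
    ne_eq, Prod.mk.injEq]
  by_cases hzu : z = x ∧ u = y
  · obtain ⟨rfl, rfl⟩ := hzu
    simp [hTx, hTy]
  · constructor
    · rintro ⟨hmem, hTzu, hrow, hne⟩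
      exact ⟨hzu, hmem, (hlt hmem.1 hmem.2 hzu hrow).1 hTzu, hrow, hne⟩
    · rintro ⟨-, hmem, hTzu, hrow, hne⟩
      exact ⟨hmem, (hlt hmem.1 hmem.2 hzu hrow).2 hTzu, hrow, hne⟩

end SwapEntries

/-- Exchanging entries `i` and `i+1` lying in different rows and different columns with
`i` strictly above `i+1` yields a standard balanced tableau with one fewer inversion. -/
theorem commutation_decreases_invT (n : ℕ) (w : Equiv.Perm (Fin n))
    (T : ℕ × ℕ → ℕ) (i : ℕ) (hT : IsSBT (RotheD n w) T)
    (x y : ℕ × ℕ) (hx : x ∈ RotheD n w) (hy : y ∈ RotheD n w)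
    (hTx : T x = i) (hTy : T y = i + 1)
    (habove : y.1 < x.1) (hcol : x.2 ≠ y.2) :
    IsSBT (RotheD n w)
        (fun z => if T z = i then i + 1 else if T z = i + 1 then i else T z) ∧
      invT (RotheD n w)
          (fun z => if T z = i then i + 1 else if T z = i + 1 then i else T z) + 1
        = invT (RotheD n w) T := by
  have hswap : (fun z => if T z = i then i + 1 else if T z = i + 1 then i else T z)
      = swap i (i + 1) ∘ T := funext fun z => (swap_apply_def i (i + 1) (T z)).symm
  rw [hswap]
  exact ⟨hT.swap_comp hx hy hTx hTy habove.ne' hcol,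
    invT_swap_comp_add_one hT.1 hx hy hTx hTy habove hcol⟩
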